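/- Let H be an induced subgraph of G such that for all vertex pairs {x,y} of H, no shortest x-y path in G uses edges outside H. If S is a set of vertices of G containing an MEG-set of H, then every edge of H is monitored by S in G. -/
import Mathlib


open SimpleGraph

/-- Two vertices `x` and `y` monitor an edge `e` in `G`: there is a shortest path between
them, and `e` lies on every shortest path between `x` and `y`. -/
def Monitors {V : Type*} (G : SimpleGraph V) (x y : V) (e : Sym2 V) : Prop :=
  (∃ p : G.Walk x y, p.IsPath ∧ p.length = G.dist x y) ∧
    ∀ p : G.Walk x y, p.IsPath → p.length = G.dist x y → e ∈ p.edges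

/-- `S` is a monitoring edge-geodetic set of `G`. -/
def IsMEGSet {V : Type*} (G : SimpleGraph V) (S : Set V) : Prop :=
  ∀ e ∈ G.edgeSet, ∃ x ∈ S, ∃ y ∈ S, Monitors G x y e

/-- The minimum size of a monitoring edge-geodetic set of `G`. -/
noncomputable def megNum {V : Type*} (G : SimpleGraph V) : ℕ :=
  sInf {n | ∃ S : Set V, IsMEGSet G S ∧ S.ncard = n}

/-- The set of leaves (degree-1 vertices) of `G`. -/
def leaves {V : Type*} (G : SimpleGraph V) : Set V :=
  {v | (G.neighborSet v).ncard = 1}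


/-- `S` is an MEG-set of the subgraph of `G` induced on `s` (with `S ⊆ s`). -/
def IsMEGSetOn {V : Type*} (G : SimpleGraph V) (s S : Set V) : Prop :=
  S ⊆ s ∧ IsMEGSet (G.induce s) {x : ↥s | (x : V) ∈ S}

section Aux

variable {V : Type*} {G : SimpleGraph V} {s : Set V}

/-- The homomorphism from an induced subgraph back to the ambient graph. -/
def inducedHom (G : SimpleGraph V) (s : Set V) : G.induce s →g G :=
  ⟨Subtype.val, fun h => h⟩

/-- Lift a walk whose support lies in `s` to the induced subgraph. -/
def liftWalk : ∀ {x y : V} (p : G.Walk x y) (hsup : ∀ w ∈ p.support, w ∈ s),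
    (G.induce s).Walk ⟨x, hsup x p.start_mem_support⟩ ⟨y, hsup y p.end_mem_support⟩
  | _, _, Walk.nil, _ => Walk.nil
  | _, _, Walk.cons h q, hsup =>
      Walk.cons (by simpa using h)
        (liftWalk q (fun w hw => hsup w (by simp [hw])))

lemma liftWalk_length {x y : V} (p : G.Walk x y) (hsup : ∀ w ∈ p.support, w ∈ s) :
    (liftWalk p hsup).length = p.length := by
  induction p with
  | nil => rfl
  | cons h q ih => simp [liftWalk, ih]

lemma liftWalk_support {x y : V} (p : G.Walk x y) (hsup : ∀ w ∈ p.support, w ∈ s) :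
    (liftWalk p hsup).support.map Subtype.val = p.support := by
  induction p with
  | nil => rfl
  | cons h q ih => simp [liftWalk, ih]

lemma liftWalk_edges {x y : V} (p : G.Walk x y) (hsup : ∀ w ∈ p.support, w ∈ s) :
    (liftWalk p hsup).edges.map (Sym2.map Subtype.val) = p.edges := by
  induction p with
  | nil => rfl
  | cons h q ih => simp [liftWalk, ih]

lemma liftWalk_isPath {x y : V} (p : G.Walk x y) (hsup : ∀ w ∈ p.support, w ∈ s)
    (hp : p.IsPath) : (liftWalk p hsup).IsPath := by
  rw [Walk.isPath_def] at hp ⊢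
  have := liftWalk_support p hsup
  exact List.Nodup.of_map Subtype.val (this ▸ hp)

lemma dist_induce_eq
    (hgeo : ∀ x ∈ s, ∀ y ∈ s, ∀ p : G.Walk x y, p.IsPath → p.length = G.dist x y →
      ∀ w ∈ p.support, w ∈ s)
    {x y : V} (hx : x ∈ s) (hy : y ∈ s) (hr : G.Reachable x y) :
    (G.induce s).dist ⟨x, hx⟩ ⟨y, hy⟩ = G.dist x y := by
  obtain ⟨p, hp, hlen⟩ := hr.exists_path_of_dist
  have hsup : ∀ w ∈ p.support, w ∈ s := hgeo x hx y hy p hp hlen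
  refine le_antisymm ?_ ?_
  · calc (G.induce s).dist ⟨x, hx⟩ ⟨y, hy⟩ ≤ (liftWalk p hsup).length :=
        SimpleGraph.dist_le _
      _ = p.length := liftWalk_length p hsup
      _ = G.dist x y := hlen
  · obtain ⟨r, _, hrlen⟩ := ((liftWalk p hsup).reachable).exists_path_of_dist
    calc G.dist x y ≤ (r.map (inducedHom G s)).length := SimpleGraph.dist_le _
      _ = r.length := Walk.length_map _ _
      _ = (G.induce s).dist ⟨x, hx⟩ ⟨y, hy⟩ := hrlen

end Aux

theorem induced_subgraph_edges_monitored {V : Type*} [Fintype V] (G : SimpleGraph V)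
    (hG : G.Connected) (s : Set V)
    (hgeo : ∀ x ∈ s, ∀ y ∈ s, ∀ p : G.Walk x y, p.IsPath → p.length = G.dist x y →
      ∀ w ∈ p.support, w ∈ s)
    (S : Set V) (hS : ∃ S' ⊆ S, IsMEGSetOn G s S') :
    ∀ e ∈ G.edgeSet, (∀ u ∈ e, u ∈ s) → ∃ x ∈ S, ∃ y ∈ S, Monitors G x y e := by
  obtain ⟨S', hS'S, hS's, hmeg⟩ := hS
  intro e he hes
  induction e with
  | _ u v =>
    have hu : u ∈ s := hes u (Sym2.mem_mk_left u v)
    have hv : v ∈ s := hes v (Sym2.mem_mk_right u v)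
    have hadj : G.Adj u v := he
    have he' : s((⟨u, hu⟩ : s), (⟨v, hv⟩ : s)) ∈ (G.induce s).edgeSet := by
      simpa using hadj
    obtain ⟨x, hxS', y, hyS', hmon⟩ := hmeg _ he'
    refine ⟨x.val, hS'S hxS', y.val, hS'S hyS', ?_, ?_⟩
    · exact (hG (x.val) (y.val)).exists_path_of_dist
    · intro p hp hlen
      have hsup : ∀ w ∈ p.support, w ∈ s := hgeo _ x.2 _ y.2 p hp hlen
      set q := liftWalk p hsup with hq
      have hqpath : q.IsPath := liftWalk_isPath p hsup hp
      have hqlen : q.length = (G.induce s).dist ⟨x.val, x.2⟩ ⟨y.val, y.2⟩ := by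
        rw [liftWalk_length p hsup, hlen, dist_induce_eq hgeo x.2 y.2 (hG x.val y.val)]
      have hx2 : (⟨x.val, x.2⟩ : s) = x := rfl
      have hy2 : (⟨y.val, y.2⟩ : s) = y := rfl
      have hmem := hmon.2 q hqpath hqlen
      have := liftWalk_edges p hsup
      rw [← this]
      refine List.mem_map.mpr ⟨_, hmem, ?_⟩
      simp
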